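/- arXiv:2409.08951 — 4 statements merged into one kernel-verified Lean document; each statement's English description precedes it below -/
import Mathlib

section
/- Suppose honest node i confirms block B at time t, does not confirm any conflicting block of the same height by time t+2Δ (and thus finalizes B), and every block confirmed by any honest node is received and confirmed by every other honest node within Δ time. If an honest node j confirms a block B' conflicting with B at some time τ, then τ > t+Δ and j had already confirmed B by time t+Δ, so j confirms both B and B' within 4Δ of each other and therefore halts without finalizing B'. Consequently, no two honest nodes finalize conflicting blocks of the same height. -/
/-- Stubborn Nakamoto consistency.  Under synchrony (confirmations
propagate within `Δ`), the finalization rule (a node finalizes `B` confirmed at `t`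
only if it confirms no conflicting block of the same height by `t + 2Δ`) and the
halting rule (confirming two conflicting blocks within `4Δ` causes a halt without
finalizing the later block), no two honest nodes finalize conflicting blocks of the
same height. -/
theorem stubborn_nakamoto_consistency
    (Node Block : Type) (height : Block → ℕ)
    (honest : Node → Prop)
    (confirms : Node → ℝ → Block → Prop)
    (finalizes : Node → Block → Prop)
    (halts : Node → Prop)
    (Δ : ℝ) (hΔ : 0 < Δ)
    -- synchrony: a confirmation by an honest node at time t is confirmed by every
    -- honest node by time t + Δ
    (sync : ∀ i j B t, honest i → honest j → confirms i t B →
      ∃ s, s ≤ t + Δ ∧ confirms j s B)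
    -- finality rule: an honest node finalizes B only if it confirmed B at some time t
    -- and confirmed no conflicting block of the same height by time t + 2Δ
    (final_rule : ∀ i B, honest i → finalizes i B →
      ∃ t, confirms i t B ∧
        ∀ B' τ, B' ≠ B → height B' = height B → confirms i τ B' → t + 2 * Δ < τ)
    -- halting rule: an honest node that confirms two conflicting blocks within 4Δ halts
    (halt_rule : ∀ i B B' t τ, honest i → confirms i t B → confirms i τ B' →
      B ≠ B' → height B = height B' → t ≤ τ → τ ≤ t + 4 * Δ → halts i)
    -- a halted node finalizes no block confirmed after the conflict was observed;
    -- in particular it does not finalize the later conflicting block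
    (halt_no_late_final : ∀ i B B' t τ, honest i → confirms i t B → confirms i τ B' →
      B ≠ B' → height B = height B' → t ≤ τ → τ ≤ t + 4 * Δ → ¬ finalizes i B') :
    ∀ i j B B', honest i → honest j → finalizes i B → finalizes j B' →
      height B = height B' → B = B' := by
  intro i j B B' hi hj hfi hfj hh
  by_contra hne
  obtain ⟨t, hct, hni⟩ := final_rule i B hi hfi
  obtain ⟨t', hct', hnj⟩ := final_rule j B' hj hfj
  obtain ⟨s, hs, hcs⟩ := sync j i B' t' hj hi hct'
  obtain ⟨s', hs', hcs'⟩ := sync i j B t hi hj hct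
  have h1 := hni B' s (Ne.symm hne) hh.symm hcs
  have h2 := hnj B s' hne hh hcs'
  linarith
end

section
/- Under the synchrony assumption (any block confirmed by an honest node at time t is confirmed by all honest nodes by t+Δ) and the Stubborn Nakamoto rules, if some honest node i finalizes block B (confirmed at time t with no conflicting confirmation by t+2Δ), then for every honest node j, block B is the first-confirmed block at its height in j's view; that is, either j never confirms a block conflicting with B and confirms B by t+Δ, or j confirms a conflicting block only at a time strictly later than its confirmation of B. -/
/-- If an honest node `i` finalizes block `B` (confirmed at time `t` with
no conflicting confirmation by `t + 2Δ`), then for every honest node `j`, block `B` is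
the first-confirmed block at its height in `j`'s view: `j` confirms `B` at some time
`s ≤ t + Δ`, and any confirmation by `j` of a conflicting block occurs strictly later
than `s`. -/
theorem stubborn_nakamoto_first_confirmed
    (Node Block : Type) (height : Block → ℕ)
    (honest : Node → Prop)
    (confirms : Node → ℝ → Block → Prop)
    (Δ : ℝ) (hΔ : 0 < Δ)
    -- synchrony: a confirmation by an honest node at time t is confirmed by every
    -- honest node by time t + Δ
    (sync : ∀ i j B t, honest i → honest j → confirms i t B →
      ∃ s, s ≤ t + Δ ∧ confirms j s B)
    (i : Node) (B : Block) (t : ℝ)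
    (hi : honest i)
    (hconf : confirms i t B)
    -- i confirms no conflicting block of the same height by time t + 2Δ
    (hclean : ∀ B' τ, B' ≠ B → height B' = height B → confirms i τ B' →
      t + 2 * Δ < τ) :
    ∀ j, honest j →
      ∃ s, s ≤ t + Δ ∧ confirms j s B ∧
        ∀ B' τ, B' ≠ B → height B' = height B → confirms j τ B' → s < τ := by
  intro j hj
  obtain ⟨s, hs, hjs⟩ := sync i j B t hi hj hconf
  refine ⟨s, hs, hjs, ?_⟩
  intro B' τ hne hht hjτ
  obtain ⟨u, hu, hiu⟩ := sync j i B' τ hj hi hjτ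
  have := hclean B' u hne hht hiu
  linarith
end

section
/- Under synchrony, if honest node i confirms block B at time t, confirms no block conflicting with B during [t, t+4Δ] (hence finalizes B and does not halt), then every honest node j confirms B by time t+Δ, confirms no conflicting block during the 2Δ window after its confirmation of B, and therefore finalizes B. Hence if any honest node finalizes B without halting, all honest nodes finalize B. -/
/-- If an honest node `i` confirms `B` at time `t` and confirms no
conflicting block of the same height by time `t + 4Δ` (hence `i` finalizes `B` and
does not halt), then every honest node `j` confirms `B` by time `t + Δ`, confirms no
conflicting block within the `2Δ` window after its confirmation of `B`, and therefore
finalizes `B`.  Hence if any honest node finalizes `B` without halting, all honest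
nodes finalize `B`. -/
theorem stubborn_nakamoto_all_finalize
    (Node Block : Type) (height : Block → ℕ)
    (honest : Node → Prop)
    (confirms : Node → ℝ → Block → Prop)
    (finalizes : Node → Block → Prop)
    (Δ : ℝ) (hΔ : 0 < Δ)
    -- synchrony
    (sync : ∀ i j B t, honest i → honest j → confirms i t B →
      ∃ s, s ≤ t + Δ ∧ confirms j s B)
    -- finalization rule (introduction): a node that confirms B at time s and confirms
    -- no conflicting block during [s, s + 2Δ] finalizes B
    (final_intro : ∀ j B s, honest j → confirms j s B →
      (∀ B' τ, B' ≠ B → height B' = height B → confirms j τ B' →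
        ¬ (s ≤ τ ∧ τ ≤ s + 2 * Δ)) → finalizes j B)
    (i : Node) (B : Block) (t : ℝ)
    (hi : honest i)
    (hconf : confirms i t B)
    -- i confirms no block conflicting with B at any time ≤ t + 4Δ
    (hclean : ∀ B' τ, B' ≠ B → height B' = height B → confirms i τ B' →
      t + 4 * Δ < τ) :
    ∀ j, honest j →
      ∃ s, s ≤ t + Δ ∧ confirms j s B ∧
        (∀ B' τ, B' ≠ B → height B' = height B → confirms j τ B' →
          ¬ (s ≤ τ ∧ τ ≤ s + 2 * Δ)) ∧
        finalizes j B := by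
  intro j hj
  obtain ⟨s, hs, hconfj⟩ := sync i j B t hi hj hconf
  have hclean' : ∀ B' τ, B' ≠ B → height B' = height B → confirms j τ B' →
      ¬ (s ≤ τ ∧ τ ≤ s + 2 * Δ) := by
    rintro B' τ hne hht hconf' ⟨h1, h2⟩
    obtain ⟨u, hu, hconfu⟩ := sync j i B' τ hj hi hconf'
    have := hclean B' u hne hht hconfu
    linarith
  exact ⟨s, hs, hconfj, hclean', final_intro j B s hj hconfj hclean'⟩
end

section
/- In the halting argument of the Stubborn Nakamoto consistency proof: if honest node i confirms B at time t and confirms no conflicting block during [t, t+2Δ], and honest node j confirms a conflicting block B' at time τ, then under synchrony j confirmed B by time t+Δ and τ > t+Δ; moreover if additionally τ ≤ t+3Δ then i would have confirmed B' by time τ+Δ ≤ t+4Δ... hence if i also does not confirm any conflicting block through t+4Δ, then τ > t+3Δ, and therefore j's confirmations of B (by t+Δ) and B' (at τ > t+3Δ) are separated by more than 2Δ, so j finalizes B. -/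
/-- The timing chain in the Stubborn Nakamoto consistency/recovery
proof.  If honest node `i` confirms `B` at time `t` and confirms no conflicting block
by time `t + 4Δ`, then for any honest node `j`: every confirmation by `j` of a block
conflicting with `B` occurs at a time `τ > t + 3Δ`; moreover `j` confirms `B` at some
time `s ≤ t + Δ`, its `2Δ` window after `s` is free of conflicting confirmations, and
therefore `j` finalizes `B`. -/
theorem stubborn_nakamoto_timing_chain
    (Node Block : Type) (height : Block → ℕ)
    (honest : Node → Prop)
    (confirms : Node → ℝ → Block → Prop)
    (finalizes : Node → Block → Prop)
    (Δ : ℝ) (hΔ : 0 < Δ)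
    -- synchrony: any confirmation by an honest node at time s is confirmed by all
    -- honest nodes by time s + Δ
    (sync : ∀ i j B s, honest i → honest j → confirms i s B →
      ∃ s', s' ≤ s + Δ ∧ confirms j s' B)
    -- finalization rule: a node that confirms B at time s and confirms no
    -- conflicting block during [s, s + 2Δ] finalizes B
    (final_intro : ∀ j B s, honest j → confirms j s B →
      (∀ B' τ, B' ≠ B → height B' = height B → confirms j τ B' →
        ¬ (s ≤ τ ∧ τ ≤ s + 2 * Δ)) → finalizes j B)
    (i : Node) (B : Block) (t : ℝ)
    (hi : honest i)
    (hconf : confirms i t B)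
    -- i confirms no block conflicting with B by time t + 4Δ
    (hclean : ∀ B' τ, B' ≠ B → height B' = height B → confirms i τ B' →
      t + 4 * Δ < τ) :
    ∀ j, honest j →
      (∀ B' τ, B' ≠ B → height B' = height B → confirms j τ B' → t + 3 * Δ < τ) ∧
      ∃ s, s ≤ t + Δ ∧ confirms j s B ∧
        (∀ B' τ, B' ≠ B → height B' = height B → confirms j τ B' →
          ¬ (s ≤ τ ∧ τ ≤ s + 2 * Δ)) ∧
        finalizes j B := by
  intro j hj
  have hlate : ∀ B' τ, B' ≠ B → height B' = height B → confirms j τ B' → t + 3 * Δ < τ := by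
    intro B' τ hne hh hc
    obtain ⟨τ', hτ'le, hτ'c⟩ := sync j i B' τ hj hi hc
    have := hclean B' τ' hne hh hτ'c
    linarith
  refine ⟨hlate, ?_⟩
  obtain ⟨s, hsle, hsc⟩ := sync i j B t hi hj hconf
  have hwin : ∀ B' τ, B' ≠ B → height B' = height B → confirms j τ B' →
      ¬ (s ≤ τ ∧ τ ≤ s + 2 * Δ) := by
    intro B' τ hne hh hc ⟨h1, h2⟩
    have := hlate B' τ hne hh hc
    linarith
  exact ⟨s, hsle, hsc, hwin, final_intro j B s hj hsc hwin⟩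
end
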